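/- Let G=(V,E,c) be a capacitated tree and s_1,…,s_k supply vectors on G. For each 1≤i≤k let v_i be any median vertex for s_i. Then λ(G; s_1∘v_1,…,s_k∘v_k) = λ(G; s_1,…,s_k); that is, choosing a median target for each supply vector is an optimal solution to the target location problem for maximizing concurrent multi-commodity flow on trees. -/

import Mathlib

open Finset

/-- A flow `f` on an (arbitrarily oriented) undirected graph satisfies the
demand vector `d` if at every vertex the net inflow equals the demand. -/
def satisfiesFlow {V E : Type*} [Fintype E] [DecidableEq V]
    (hd tl : E → V) (f : E → ℝ) (d : V → ℝ) : Prop :=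
  ∀ v : V, d v = (∑ e : E, if hd e = v then f e else 0)
      - (∑ e : E, if tl e = v then f e else 0)

/-- `assign s v` is the demand vector `s ∘ v` obtained from the supply vector `s`
by making `v` the target: it agrees with `s` off `v` and has value
`-∑_{u ≠ v} s u` at `v`. -/
def assign {V : Type*} [Fintype V] [DecidableEq V] (s : V → ℝ) (v : V) : V → ℝ :=
  fun u => if u = v then -(∑ w ∈ univ.erase v, s w) else s u

/-- The optimum of the maximum concurrent multi-commodity flow problem for
demand vectors `d i` on the capacitated graph given by `hd`, `tl`, `c`:
the largest `l ≥ 0` such that some valid multi-commodity flow satisfies `l • d i`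
for all `i`. -/
noncomputable def lamD {V E ι : Type*} [Fintype V] [Fintype E] [Fintype ι] [DecidableEq V]
    (hd tl : E → V) (c : E → ℝ) (d : ι → V → ℝ) : ℝ :=
  sSup {l : ℝ | 0 ≤ l ∧ ∃ f : ι → E → ℝ,
    (∀ e, ∑ i, |f i e| ≤ c e) ∧
    ∀ i, satisfiesFlow hd tl (f i) (fun v => l * d i v)}

/-- The optimum of the target location problem LoMuF for supply vectors `s i`:
the best value of `lamD` over all choices of targets. -/
noncomputable def lamS {V E ι : Type*} [Fintype V] [Fintype E] [Fintype ι] [DecidableEq V]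
    (hd tl : E → V) (c : E → ℝ) (s : ι → V → ℝ) : ℝ :=
  sSup {l : ℝ | 0 ≤ l ∧ ∃ (v : ι → V) (f : ι → E → ℝ),
    (∀ e, ∑ i, |f i e| ≤ c e) ∧
    ∀ i, satisfiesFlow hd tl (f i) (fun u => l * assign (s i) (v i) u)}

open scoped Classical in
/-- `v` is a median vertex of the graph `G` for the (supply) vector `d`:
for every connected component `C` of `G - v`, the total `|d|`-weight of `C`
is at most the total `|d|`-weight of its complement. -/
def IsMedian {V : Type*} [Fintype V] (G : SimpleGraph V) (d : V → ℝ) (v : V) : Prop :=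
  ∀ C : (G.induce {w | w ≠ v}).ConnectedComponent,
    (∑ x : V, if h : x ≠ v then
        (if (G.induce {w | w ≠ v}).connectedComponentMk ⟨x, h⟩ = C then |d x| else 0)
      else 0)
    ≤ ∑ x : V, if h : x ≠ v then
        (if (G.induce {w | w ≠ v}).connectedComponentMk ⟨x, h⟩ = C then 0 else |d x|)
      else |d x|

/-!
On a tree, the flow of a commodity on an edge is forced: it equals the total demand on the far
side of the edge. Moving the target of a supply vector `s` from `w` to `v` changes that side-sum
only on the edges separating `v` from `w`, where it is `a` for one target and `a - σ` for the
other (`a` the supply on that side, `σ` the total supply). A median lies on the heavier side of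
every edge, which makes the side-sum for the median the smaller one in absolute value. So a
feasible concurrent flow for arbitrary targets is turned into one for the medians, using no more
capacity on any edge, by adding `σ` units along the tree path between the two targets.
-/

open SimpleGraph

section Flow

variable {V E : Type*} [Fintype E] [DecidableEq V] {hd tl : E → V}

def netInflow (hd tl : E → V) : (E → ℝ) →ₗ[ℝ] V → ℝ :=
  Fintype.linearCombination ℝ fun e => Pi.single (hd e) 1 - Pi.single (tl e) 1

theorem satisfiesFlow_iff {f : E → ℝ} {d : V → ℝ} :
    satisfiesFlow hd tl f d ↔ netInflow hd tl f = d := by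
  simp only [satisfiesFlow, netInflow, Fintype.linearCombination_apply, funext_iff,
    Finset.sum_apply, Pi.smul_apply, Pi.sub_apply, Pi.single_apply, smul_eq_mul, mul_sub,
    mul_ite, mul_one, mul_zero, sum_sub_distrib, eq_comm (a := d _), eq_comm (b := hd _),
    eq_comm (b := tl _)]

theorem netInflow_single [DecidableEq E] (e : E) (t : ℝ) :
    netInflow hd tl (Pi.single e t) = t • (Pi.single (hd e) 1 - Pi.single (tl e) 1) :=
  Fintype.linearCombination_apply_single ..

theorem SimpleGraph.Reachable.exists_netInflow_eq {G : SimpleGraph V}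
    (hadj : ∀ u v, G.Adj u v → ∃ e, (tl e = u ∧ hd e = v) ∨ (tl e = v ∧ hd e = u))
    {a b : V} (h : G.Reachable a b) (t : ℝ) :
    ∃ f, netInflow hd tl f = t • (Pi.single b 1 - Pi.single a 1) := by
  classical
  obtain ⟨p⟩ := h
  induction p with
  | nil => exact ⟨0, by simp⟩
  | cons hax _ ih =>
    obtain ⟨f, hf⟩ := ih
    obtain ⟨e, ⟨rfl, rfl⟩ | ⟨rfl, rfl⟩⟩ := hadj _ _ hax
    · exact ⟨Pi.single e t + f, by rw [map_add, hf, netInflow_single]; module⟩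
    · exact ⟨Pi.single e (-t) + f, by rw [map_add, hf, netInflow_single]; module⟩

theorem sum_netInflow_apply (f : E → ℝ) (S : Finset V) :
    ∑ x ∈ S, netInflow hd tl f x =
      ∑ e, f e * ((if hd e ∈ S then 1 else 0) - if tl e ∈ S then 1 else 0) := by
  simp only [netInflow, Fintype.linearCombination_apply, Finset.sum_apply, Pi.smul_apply,
    smul_eq_mul, Pi.sub_apply]
  rw [Finset.sum_comm]
  simp only [← mul_sum, sum_sub_distrib, Finset.sum_pi_single']

theorem eq_sum_netInflow_of_forall_ne_mem_iff {f : E → ℝ} {S : Finset V} {e₀ : E}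
    (hhd : hd e₀ ∈ S) (htl : tl e₀ ∉ S) (hS : ∀ e ≠ e₀, (tl e ∈ S ↔ hd e ∈ S)) :
    f e₀ = ∑ x ∈ S, netInflow hd tl f x := by
  rw [sum_netInflow_apply, Finset.sum_eq_single e₀ (fun e _ he => by simp [hS e he]) (by simp)]
  simp [hhd, htl]

end Flow

section EdgeSide

variable {V : Type*} {G : SimpleGraph V} {a b x y : V}

theorem SimpleGraph.Preconnected.reachable_deleteEdges_or (hG : G.Preconnected) (x : V) :
    (G.deleteEdges {s(a, b)}).Reachable a x ∨ (G.deleteEdges {s(a, b)}).Reachable b x := by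
  set H := G.deleteEdges {s(a, b)}
  by_contra hx
  obtain ⟨d, -, hd, hd'⟩ := (hG a x).some.exists_boundary_dart
    {y | H.Reachable a y ∨ H.Reachable b y} (.inl .rfl) hx
  by_cases hab : s(d.fst, d.snd) = s(a, b)
  · rcases Sym2.eq_iff.1 hab with ⟨-, h⟩ | ⟨-, h⟩
    · exact hd' (.inr (h ▸ .rfl))
    · exact hd' (.inl (h ▸ .rfl))
  · have hH : H.Adj d.fst d.snd := by simp [H, d.adj, hab]
    exact hd' (hd.imp (·.trans hH.reachable) (·.trans hH.reachable))

variable [Fintype V]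

open Classical in
noncomputable def edgeSide (G : SimpleGraph V) (a b : V) : Finset V :=
  {x | (G.deleteEdges {s(a, b)}).Reachable b x}

theorem mem_edgeSide : x ∈ edgeSide G a b ↔ (G.deleteEdges {s(a, b)}).Reachable b x := by
  simp [edgeSide]

theorem self_mem_edgeSide : b ∈ edgeSide G a b :=
  mem_edgeSide.2 .rfl

theorem mem_edgeSide_iff_of_adj (hxy : G.Adj x y) (hne : s(x, y) ≠ s(a, b)) :
    x ∈ edgeSide G a b ↔ y ∈ edgeSide G a b := by
  have hxy' : (G.deleteEdges {s(a, b)}).Adj x y := by simp [hxy, hne]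
  simp only [mem_edgeSide]
  exact ⟨fun h => h.trans hxy'.reachable, fun h => h.trans hxy'.symm.reachable⟩

theorem SimpleGraph.IsAcyclic.not_mem_edgeSide (hG : G.IsAcyclic) (hab : G.Adj a b) :
    a ∉ edgeSide G a b := fun h =>
  isBridge_iff.1 (isAcyclic_iff_forall_adj_isBridge.1 hG hab) (mem_edgeSide.1 h).symm

theorem SimpleGraph.IsTree.compl_edgeSide [DecidableEq V] (hG : G.IsTree) (hab : G.Adj a b) :
    (edgeSide G a b)ᶜ = edgeSide G b a := by
  ext x
  rw [Finset.mem_compl, mem_edgeSide, mem_edgeSide, Sym2.eq_swap (a := b)]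
  refine ⟨(hG.connected.preconnected.reachable_deleteEdges_or x).resolve_right, fun hax hbx => ?_⟩
  exact hG.isAcyclic.not_mem_edgeSide hab (mem_edgeSide.2 (hbx.trans hax.symm))

end EdgeSide

section Median

variable {V : Type*} [Fintype V] [DecidableEq V] {G : SimpleGraph V} {d : V → ℝ} {v : V}

theorem IsMedian.sum_abs_le_sum_abs_compl (hv : IsMedian G d v) {a : V} (ha : a ≠ v)
    {T : Finset V}
    (hT : ∀ x ∈ T, ∃ hx : x ≠ v, (G.induce {w | w ≠ v}).Reachable ⟨a, ha⟩ ⟨x, hx⟩) :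
    ∑ x ∈ T, |d x| ≤ ∑ x ∈ Tᶜ, |d x| := by
  classical
  set C := (G.induce {w | w ≠ v}).connectedComponentMk ⟨a, ha⟩
  set K : Finset V := {x | ∃ hx : x ≠ v, (G.induce {w | w ≠ v}).connectedComponentMk ⟨x, hx⟩ = C}
  have hTK : T ⊆ K := fun x hx => by
    obtain ⟨hxv, hax⟩ := hT x hx
    simp only [K, C, Finset.mem_filter, mem_univ, true_and]
    exact ⟨hxv, ConnectedComponent.sound hax.symm⟩
  have hK : ∑ x ∈ K, |d x| ≤ ∑ x ∈ Kᶜ, |d x| := by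
    convert hv C using 1 <;> simp only [K, Finset.compl_filter, Finset.sum_filter] <;>
      refine sum_congr rfl fun x _ => ?_ <;> by_cases hx : x = v <;> simp [hx]
  calc ∑ x ∈ T, |d x| ≤ ∑ x ∈ K, |d x| := sum_le_sum_of_subset_of_nonneg hTK (by simp)
    _ ≤ ∑ x ∈ Kᶜ, |d x| := hK
    _ ≤ ∑ x ∈ Tᶜ, |d x| := sum_le_sum_of_subset_of_nonneg (compl_subset_compl.2 hTK) (by simp)

theorem IsMedian.sum_abs_edgeSide_le (hv : IsMedian G d v) {a b : V}
    (hvS : v ∉ edgeSide G a b) :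
    ∑ x ∈ edgeSide G a b, |d x| ≤ ∑ x ∈ (edgeSide G a b)ᶜ, |d x| := by
  have hb : b ≠ v := fun h => hvS (h ▸ self_mem_edgeSide)
  refine hv.sum_abs_le_sum_abs_compl hb fun x hx => ?_
  obtain ⟨p⟩ := mem_edgeSide.1 hx
  have hp : ∀ y ∈ p.support, y ≠ v := fun y hy h =>
    hvS (h ▸ mem_edgeSide.2 ⟨p.takeUntil y hy⟩)
  exact ⟨hp x p.end_mem_support,
    ⟨(p.mapLe (G.deleteEdges_le _)).induce {w | w ≠ v} (by simpa using hp)⟩⟩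

end Median

section Assign

variable {V : Type*} [Fintype V] [DecidableEq V]

theorem assign_eq_sub (s : V → ℝ) (t : V) : assign s t = s - (∑ x, s x) • Pi.single t 1 := by
  funext x
  by_cases hx : x = t
  · subst hx
    have := Finset.sum_erase_add univ s (mem_univ x)
    simp only [assign, if_pos, Pi.sub_apply, Pi.smul_apply, Pi.single_eq_same, smul_eq_mul]
    linarith
  · simp [assign, hx]

theorem sum_assign (s : V → ℝ) (t : V) (S : Finset V) :
    ∑ x ∈ S, assign s t x = ∑ x ∈ S, s x - if t ∈ S then ∑ x, s x else 0 := by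
  simp [assign_eq_sub, sum_sub_distrib, ← mul_sum, Finset.sum_pi_single']

theorem abs_sum_assign_le {s : V → ℝ} (hs : ∀ u, s u ≤ 0) {S : Finset V} {v : V} (w : V)
    (hin : v ∈ S → ∑ x ∈ Sᶜ, |s x| ≤ ∑ x ∈ S, |s x|)
    (hout : v ∉ S → ∑ x ∈ S, |s x| ≤ ∑ x ∈ Sᶜ, |s x|) :
    |∑ x ∈ S, assign s v x| ≤ |∑ x ∈ S, assign s w x| := by
  have habs : ∀ T : Finset V, ∑ x ∈ T, |s x| = -∑ x ∈ T, s x := fun T => by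
    simp [abs_of_nonpos (hs _), sum_neg_distrib]
  have hS : ∑ x ∈ S, s x ≤ 0 := sum_nonpos fun x _ => hs x
  have hSc : ∑ x ∈ Sᶜ, s x ≤ 0 := sum_nonpos fun x _ => hs x
  rw [habs, habs] at hin hout
  rw [sum_assign, sum_assign, ← sum_add_sum_compl S s]
  by_cases hv : v ∈ S <;> by_cases hw : w ∈ S <;> simp only [hv, hw, if_true, if_false]
  · exact le_rfl
  · rw [sub_zero, abs_of_nonpos hS, abs_of_nonneg (by linarith)]
    linarith [hin hv]
  · rw [sub_zero, abs_of_nonpos hS, abs_of_nonneg (by linarith)]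
    linarith [hout hv]
  · exact le_rfl

end Assign

section Tree

variable {V E : Type*} [Fintype V] [Fintype E] [DecidableEq V] {G : SimpleGraph V}
  {hd tl : E → V}

theorem IsMedian.abs_sum_edgeSide_assign_le {s : V → ℝ} {v : V} (hG : G.IsTree)
    (hs : ∀ u, s u ≤ 0) (hv : IsMedian G s v) {a b : V} (hab : G.Adj a b) (w : V) :
    |∑ x ∈ edgeSide G a b, assign s v x| ≤ |∑ x ∈ edgeSide G a b, assign s w x| := by
  refine abs_sum_assign_le hs w (fun hvS => ?_) hv.sum_abs_edgeSide_le
  rw [hG.compl_edgeSide hab, ← hG.compl_edgeSide hab.symm]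
  exact hv.sum_abs_edgeSide_le (by rwa [← hG.compl_edgeSide hab, mem_compl, not_not])

theorem SimpleGraph.IsAcyclic.apply_eq_sum_edgeSide (hG : G.IsAcyclic)
    (hE : ∀ e, G.Adj (tl e) (hd e))
    (hinj : ∀ e e', ((tl e = tl e' ∧ hd e = hd e') ∨ (tl e = hd e' ∧ hd e = tl e')) → e = e')
    (f : E → ℝ) (e₀ : E) :
    f e₀ = ∑ x ∈ edgeSide G (tl e₀) (hd e₀), netInflow hd tl f x :=
  eq_sum_netInflow_of_forall_ne_mem_iff self_mem_edgeSide (hG.not_mem_edgeSide (hE e₀))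
    fun e he => mem_edgeSide_iff_of_adj (hE e) fun h => he (hinj e e₀ (Sym2.eq_iff.1 h))

theorem IsMedian.exists_satisfiesFlow_abs_le {s : V → ℝ} {v w : V} (hG : G.IsTree)
    (hadj : ∀ u v, G.Adj u v ↔ ∃ e, (tl e = u ∧ hd e = v) ∨ (tl e = v ∧ hd e = u))
    (hinj : ∀ e e', ((tl e = tl e' ∧ hd e = hd e') ∨ (tl e = hd e' ∧ hd e = tl e')) → e = e')
    (hs : ∀ u, s u ≤ 0) (hv : IsMedian G s v) {l : ℝ} {f : E → ℝ}
    (hf : satisfiesFlow hd tl f fun u => l * assign s w u) :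
    ∃ g, satisfiesFlow hd tl g (fun u => l * assign s v u) ∧ ∀ e, |g e| ≤ |f e| := by
  have hE : ∀ e, G.Adj (tl e) (hd e) := fun e => (hadj _ _).2 ⟨e, .inl ⟨rfl, rfl⟩⟩
  replace hf : netInflow hd tl f = l • assign s w := satisfiesFlow_iff.1 hf
  obtain ⟨q, hq⟩ := (hG.connected.preconnected v w).exists_netInflow_eq
    (fun _ _ => (hadj _ _).1) (l * ∑ x, s x)
  have hg : netInflow hd tl (f + q) = l • assign s v := by
    rw [map_add, hf, hq, assign_eq_sub, assign_eq_sub]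
    module
  refine ⟨f + q, satisfiesFlow_iff.2 hg, fun e => ?_⟩
  rw [hG.isAcyclic.apply_eq_sum_edgeSide hE hinj (f + q),
    hG.isAcyclic.apply_eq_sum_edgeSide hE hinj f, hg, hf]
  simp only [Pi.smul_apply, smul_eq_mul, ← mul_sum, abs_mul]
  exact mul_le_mul_of_nonneg_left (hv.abs_sum_edgeSide_assign_le hG hs (hE e) w) (abs_nonneg l)

end Tree

theorem tree_median_optimal_general {V E ι : Type*} [Fintype V] [Fintype E] [Fintype ι]
    [DecidableEq V]
    (G : SimpleGraph V) (hT : G.IsTree)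
    (hd tl : E → V)
    (hadj : ∀ u v, G.Adj u v ↔ ∃ e, (tl e = u ∧ hd e = v) ∨ (tl e = v ∧ hd e = u))
    (hinj : ∀ e e', ((tl e = tl e' ∧ hd e = hd e') ∨ (tl e = hd e' ∧ hd e = tl e'))
        → e = e')
    (c : E → ℝ)
    (s : ι → V → ℝ) (hs : ∀ i u, s i u ≤ 0)
    (v : ι → V) (hv : ∀ i, IsMedian G (s i) (v i)) :
    lamD hd tl c (fun i => assign (s i) (v i)) = lamS hd tl c s := by
  unfold lamD lamS
  congr 1
  ext l
  refine ⟨fun ⟨hl, f, hcap, hf⟩ => ⟨hl, v, f, hcap, hf⟩, fun ⟨hl, w, f, hcap, hf⟩ => ⟨hl, ?_⟩⟩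
  choose g hg hgf using fun i => (hv i).exists_satisfiesFlow_abs_le hT hadj hinj (hs i) (hf i)
  exact ⟨g, fun e => (sum_le_sum fun i _ => hgf i e).trans (hcap e), hg⟩

/-- Theorem: on a capacitated tree, choosing a median vertex `v i` as the target of
each supply vector `s i` is an optimum solution of the target location problem
LoMuF: the concurrent flow value achieved with these targets equals the optimum
over all choices of targets. -/
theorem tree_median_optimal {V E ι : Type*} [Fintype V] [Fintype E] [Fintype ι]
    [DecidableEq V]
    (G : SimpleGraph V) (hT : G.IsTree)
    (hd tl : E → V)
    (hloop : ∀ e, tl e ≠ hd e)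
    (hadj : ∀ u v, G.Adj u v ↔ ∃ e, (tl e = u ∧ hd e = v) ∨ (tl e = v ∧ hd e = u))
    (hinj : ∀ e e', ((tl e = tl e' ∧ hd e = hd e') ∨ (tl e = hd e' ∧ hd e = tl e'))
        → e = e')
    (c : E → ℝ) (hc : ∀ e, 0 ≤ c e)
    (s : ι → V → ℝ) (hs : ∀ i u, s i u ≤ 0)
    (v : ι → V) (hv : ∀ i, IsMedian G (s i) (v i)) :
    lamD hd tl c (fun i => assign (s i) (v i)) = lamS hd tl c s :=
  tree_median_optimal_general G hT hd tl hadj hinj c s hs v hv
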